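/- arXiv:1704.03484 — 2 statements merged into one kernel-verified Lean document; each statement's English description precedes it below -/
import Mathlib

section
/- Let d ≥ 1 and let G be a finite simple graph on n ≥ d vertices with vertex set V. Then for every map φ : V → ℝ^d, the rank of the rigidity matrix satisfies rank Rig(G, φ) ≤ d·n − (d+1 choose 2). -/
/-! The row space of the rigidity matrix is the orthogonal complement of the space of
infinitesimal motions of `(G, φ)`, so it suffices to find `(d + 1).choose 2` independent
infinitesimal motions of the complete graph on `V`. Let `W` be the direction
of the affine span of `φ` and `k = dim W`. The translations along `W` and the infinitesimal
rotations of `W` give `k + k.choose 2 = (k + 1).choose 2` independent `W`-valued motions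
(independent because the differences `φ u - φ v` span `W`), and moving each vertex
independently perpendicular to `W` gives `n * (d - k)` more. Since `n ≥ d`,
`n * (d - k) + (k + 1).choose 2 ≥ (d + 1).choose 2`. -/

open scoped Classical in
/-- The row of the rigidity matrix corresponding to a potential edge of the graph:
for the edge `{u, v}`, the row contains the vector `φ u - φ v` in the block of columns
of `u`, the vector `φ v - φ u` in the block of columns of `v`, and zeros elsewhere. -/
noncomputable def rigidityRow {V : Type*} (d : ℕ) (φ : V → EuclideanSpace ℝ (Fin d)) :
    Sym2 V → (V × Fin d → ℝ) :=
  Sym2.lift ⟨fun u v c =>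
      if c.1 = u then φ u c.2 - φ v c.2
      else if c.1 = v then φ v c.2 - φ u c.2 else 0, by
    intro u v
    funext c
    by_cases h1 : c.1 = u <;> by_cases h2 : c.1 = v <;> simp_all⟩

/-- The rank of the rigidity matrix `Rig(G, φ)`, computed as the dimension of its row
space, i.e. of the span of the rows corresponding to the edges of `G`. -/
noncomputable def rigidityRank {V : Type*} (d : ℕ) (G : SimpleGraph V)
    (φ : V → EuclideanSpace ℝ (Fin d)) : ℕ :=
  Module.finrank ℝ (Submodule.span ℝ (rigidityRow d φ '' G.edgeSet))

/-- A finite simple graph `G` on `n` vertices is generically `d`-rigid if some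
`d`-embedding `φ` satisfies `rank Rig(G, φ) = d * n - (d + 1).choose 2`. -/
def GenericallyRigid {V : Type*} (d : ℕ) (G : SimpleGraph V) : Prop :=
  ∃ φ : V → EuclideanSpace ℝ (Fin d),
    rigidityRank d G φ = d * Nat.card V - (d + 1).choose 2

open RealInnerProductSpace Module

section InfinitesimalMotions

variable {V E : Type*} [NormedAddCommGroup E] [InnerProductSpace ℝ E]

namespace SimpleGraph

def infinitesimalMotions (G : SimpleGraph V) (φ : V → E) : Submodule ℝ (V → E) where
  carrier := {x | ∀ ⦃u v⦄, G.Adj u v → ⟪x u - x v, φ u - φ v⟫ = 0}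
  add_mem' {x y} hx hy u v huv := by
    simp only [Pi.add_apply, add_sub_add_comm, inner_add_left, hx huv, hy huv, add_zero]
  zero_mem' u v _ := by simp
  smul_mem' c x hx u v huv := by
    simp only [Pi.smul_apply, ← smul_sub, real_inner_smul_left, hx huv, mul_zero]

@[simp] lemma mem_infinitesimalMotions {G : SimpleGraph V} {φ x : V → E} :
    x ∈ G.infinitesimalMotions φ ↔ ∀ ⦃u v⦄, G.Adj u v → ⟪x u - x v, φ u - φ v⟫ = 0 :=
  Iff.rfl

end SimpleGraph

noncomputable def infinitesimalRotation (a b : E) : E →ₗ[ℝ] E :=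
  (innerₛₗ ℝ a).smulRight b - (innerₛₗ ℝ b).smulRight a

lemma infinitesimalRotation_apply (a b y : E) :
    infinitesimalRotation a b y = ⟪a, y⟫ • b - ⟪b, y⟫ • a := rfl

lemma inner_infinitesimalRotation_self (a b y : E) : ⟪infinitesimalRotation a b y, y⟫ = 0 := by
  rw [infinitesimalRotation_apply, inner_sub_left, real_inner_smul_left, real_inner_smul_left]
  ring

lemma infinitesimalRotation_mem {W : Submodule ℝ E} {a b : E} (ha : a ∈ W) (hb : b ∈ W) (y : E) :
    infinitesimalRotation a b y ∈ W :=
  W.sub_mem (W.smul_mem _ hb) (W.smul_mem _ ha)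

lemma inner_sum_infinitesimalRotation_apply {ι : Type*} [Fintype ι] [LinearOrder ι] {e : ι → E}
    (he : Orthonormal ℝ e) (c : {p : ι × ι // p.1 < p.2} → ℝ) (p : {p : ι × ι // p.1 < p.2}) :
    ⟪(∑ q, c q • infinitesimalRotation (e q.1.1) (e q.1.2)) (e p.1.1), e p.1.2⟫ = c p := by
  have hite := orthonormal_iff_ite.mp he
  obtain ⟨⟨a, b⟩, hab⟩ := p
  rw [LinearMap.sum_apply, sum_inner, Finset.sum_eq_single ⟨(a, b), hab⟩]
  · simp [infinitesimalRotation_apply, real_inner_smul_left, hite, hab.ne', he.1]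
  · rintro ⟨⟨i, j⟩, hij⟩ - hne
    simp only [LinearMap.smul_apply, infinitesimalRotation_apply, inner_sub_left,
      real_inner_smul_left, hite]
    split_ifs <;> grind
  · simp

section RigidMotion

variable {ι : Type*} [LinearOrder ι]

noncomputable def rigidMotion (φ : V → E) (e : ι → E) : ι ⊕ {p : ι × ι // p.1 < p.2} → V → E :=
  Sum.elim (fun i _ => e i) (fun p v => infinitesimalRotation (e p.1.1) (e p.1.2) (φ v))

lemma SimpleGraph.rigidMotion_mem_infinitesimalMotions (G : SimpleGraph V) (φ : V → E)
    (e : ι → E) (σ : ι ⊕ {p : ι × ι // p.1 < p.2}) :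
    rigidMotion φ e σ ∈ G.infinitesimalMotions φ := by
  intro u v _
  rcases σ with i | p
  · simp [rigidMotion]
  · simp only [rigidMotion, Sum.elim_inr, ← map_sub]
    exact inner_infinitesimalRotation_self _ _ _

lemma rigidMotion_apply_mem {W : Submodule ℝ E} (φ : V → E) {e : ι → E} (he : ∀ i, e i ∈ W)
    (σ : ι ⊕ {p : ι × ι // p.1 < p.2}) (v : V) : rigidMotion φ e σ v ∈ W := by
  rcases σ with i | p
  exacts [he i, infinitesimalRotation_mem (he _) (he _) _]

lemma linearIndependent_rigidMotion [Fintype ι] [Nonempty V] {φ : V → E} {e : ι → E}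
    (he : Orthonormal ℝ e) (hspan : ∀ i, e i ∈ vectorSpan ℝ (Set.range φ)) :
    LinearIndependent ℝ (rigidMotion φ e) := by
  rw [Fintype.linearIndependent_iff]
  intro c hc
  set S := ∑ p, c (.inr p) • infinitesimalRotation (e p.1.1) (e p.1.2)
  set t := ∑ i, c (.inl i) • e i
  have hmotion : ∀ v, S (φ v) = -t := fun v => by
    refine eq_neg_of_add_eq_zero_right ?_
    convert congr_fun hc v using 1 <;>
      simp [Fintype.sum_sum_type, rigidMotion, LinearMap.sum_apply, S, t]
  obtain ⟨u₀⟩ := ‹Nonempty V›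
  have hker : vectorSpan ℝ (Set.range φ) ≤ LinearMap.ker S := by
    rw [vectorSpan_eq_span_vsub_set_right ℝ (Set.mem_range_self u₀), Submodule.span_le]
    rintro _ ⟨_, ⟨v, rfl⟩, rfl⟩
    simp [hmotion]
  have hrot : ∀ p, c (.inr p) = 0 := fun p => by
    refine (inner_sum_infinitesimalRotation_apply he (fun q => c (.inr q)) p).symm.trans ?_
    rw [LinearMap.mem_ker.mp (hker (hspan _)), inner_zero_left]
  have htrans : ∀ i, c (.inl i) = 0 := by
    refine Fintype.linearIndependent_iff.mp he.linearIndependent _ ?_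
    simpa [S, hrot] using (hmotion u₀).symm
  rintro (i | p)
  exacts [htrans i, hrot p]

lemma Fintype.card_sum_subtype_lt [Fintype ι] :
    Fintype.card (ι ⊕ {p : ι × ι // p.1 < p.2}) = (Fintype.card ι + 1).choose 2 := by
  rw [Fintype.card_sum, Fintype.card_subtype, Fintype.card_product_filter_lt,
    Nat.choose_succ_succ', Nat.choose_one_right]

end RigidMotion

lemma Submodule.finrank_pi_univ_const [Fintype V] (K : Submodule ℝ E) [FiniteDimensional ℝ K] :
    finrank ℝ (Submodule.pi Set.univ fun _ : V => K) = Fintype.card V * finrank ℝ K := by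
  have hinj : Function.Injective (K.subtype.compLeft V) := fun x y h =>
    funext fun v => Subtype.ext (congr_fun h v)
  have hrange := LinearMap.range_compLeft K.subtype V
  rw [K.range_subtype] at hrange
  rw [← hrange, LinearMap.finrank_range_of_inj hinj,
    Module.finrank_pi_fintype, Finset.sum_const, Finset.card_univ, smul_eq_mul]

lemma Submodule.disjoint_pi_univ_const {K L : Submodule ℝ E} (h : Disjoint K L) :
    Disjoint (Submodule.pi Set.univ fun _ : V => K) (Submodule.pi Set.univ fun _ : V => L) := by
  rw [Submodule.disjoint_def] at h ⊢
  exact fun x hK hL => funext fun v => h _ (hK v trivial) (hL v trivial)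

lemma SimpleGraph.pi_orthogonal_vectorSpan_le_infinitesimalMotions (G : SimpleGraph V)
    (φ : V → E) :
    Submodule.pi Set.univ (fun _ : V => (vectorSpan ℝ (Set.range φ))ᗮ) ≤
      G.infinitesimalMotions φ := fun _ hx u v _ =>
  Submodule.inner_left_of_mem_orthogonal
    (vsub_mem_vectorSpan ℝ (Set.mem_range_self u) (Set.mem_range_self v))
    (Submodule.sub_mem _ (hx u trivial) (hx v trivial))

lemma Nat.succ_choose_two_le_mul_sub_add {k d n : ℕ} (hkd : k ≤ d) (hdn : d ≤ n) :
    (d + 1).choose 2 ≤ n * (d - k) + (k + 1).choose 2 := by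
  induction d, hkd using Nat.le_induction with
  | base => simp
  | succ d hkd ih =>
    have hpascal : (d + 1 + 1).choose 2 = (d + 1).choose 1 + (d + 1).choose 2 :=
      Nat.choose_succ_succ' (d + 1) 1
    rw [hpascal, Nat.choose_one_right, Nat.sub_add_comm hkd, Nat.mul_succ]
    have := ih (by omega)
    omega

theorem SimpleGraph.choose_le_finrank_infinitesimalMotions [FiniteDimensional ℝ E] [Fintype V]
    (G : SimpleGraph V) (φ : V → E) (hcard : finrank ℝ E ≤ Fintype.card V) :
    (finrank ℝ E + 1).choose 2 ≤ finrank ℝ (G.infinitesimalMotions φ) := by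
  rcases isEmpty_or_nonempty V with hV | hV
  · simp_all
  set W := vectorSpan ℝ (Set.range φ)
  let b := stdOrthonormalBasis ℝ W
  have he : Orthonormal ℝ fun i => (b i : E) := b.orthonormal.comp_linearIsometry W.subtypeₗᵢ
  set R := Submodule.span ℝ (Set.range (rigidMotion φ fun i => (b i : E)))
  set P := Submodule.pi Set.univ fun _ : V => Wᗮ
  have hR : finrank ℝ R = (finrank ℝ W + 1).choose 2 := by
    rw [finrank_span_eq_card (linearIndependent_rigidMotion he fun i => (b i).2),
      Fintype.card_sum_subtype_lt, Fintype.card_fin]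
  have hP : finrank ℝ P = Fintype.card V * (finrank ℝ E - finrank ℝ W) := by
    rw [Submodule.finrank_pi_univ_const, ← W.finrank_add_finrank_orthogonal,
      Nat.add_sub_cancel_left]
  have hRW : R ≤ Submodule.pi Set.univ fun _ : V => W := Submodule.span_le.mpr <| by
    rintro _ ⟨σ, rfl⟩ v -
    exact rigidMotion_apply_mem φ (fun i => (b i).2) σ v
  have hRP : R ⊓ P = ⊥ :=
    ((Submodule.disjoint_pi_univ_const W.orthogonal_disjoint).mono_left hRW).eq_bot
  have hle : R ⊔ P ≤ G.infinitesimalMotions φ := sup_le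
    (Submodule.span_le.mpr <| by
      rintro _ ⟨σ, rfl⟩
      exact G.rigidMotion_mem_infinitesimalMotions φ _ σ)
    (G.pi_orthogonal_vectorSpan_le_infinitesimalMotions φ)
  have hsum := Submodule.finrank_sup_add_finrank_inf_eq R P
  rw [hRP, finrank_bot, add_zero, hR, hP] at hsum
  have := Nat.succ_choose_two_le_mul_sub_add W.finrank_le hcard
  have := Submodule.finrank_mono hle
  omega

noncomputable def blockEquiv (V : Type*) (d : ℕ) :
    (V → EuclideanSpace ℝ (Fin d)) ≃ₗ[ℝ] EuclideanSpace ℝ (V × Fin d) where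
  toFun x := WithLp.toLp 2 fun p => x p.1 p.2
  invFun y v := WithLp.toLp 2 fun c => y (v, c)
  map_add' _ _ := rfl
  map_smul' _ _ := rfl
  left_inv _ := rfl
  right_inv _ := rfl

section BlockEquiv

variable {d : ℕ}

@[simp] lemma blockEquiv_apply (x : V → EuclideanSpace ℝ (Fin d)) (p : V × Fin d) :
    blockEquiv V d x p = x p.1 p.2 := rfl

lemma inner_blockEquiv [Fintype V] (x y : V → EuclideanSpace ℝ (Fin d)) :
    ⟪blockEquiv V d x, blockEquiv V d y⟫ = ∑ v, ⟪x v, y v⟫ := by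
  simp_rw [PiLp.inner_apply, Fintype.sum_prod_type]
  rfl

lemma toLp_rigidityRow_mk [DecidableEq V] (φ : V → EuclideanSpace ℝ (Fin d)) {u v : V}
    (huv : u ≠ v) :
    WithLp.toLp 2 (rigidityRow d φ s(u, v)) =
      blockEquiv V d (Pi.single u (φ u - φ v) - Pi.single v (φ u - φ v)) := by
  ext ⟨w, c⟩
  by_cases hu : w = u <;> by_cases hv : w = v <;> simp_all [rigidityRow]

lemma inner_blockEquiv_rigidityRow [Fintype V] (φ x : V → EuclideanSpace ℝ (Fin d)) {u v : V}
    (huv : u ≠ v) :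
    ⟪blockEquiv V d x, WithLp.toLp 2 (rigidityRow d φ s(u, v))⟫ = ⟪x u - x v, φ u - φ v⟫ := by
  classical
  rw [toLp_rigidityRow_mk φ huv, inner_blockEquiv]
  simp [Pi.single_apply, apply_ite (inner ℝ _), inner_sub_right, inner_sub_left]
  ring

end BlockEquiv

theorem rigidityRank_add_finrank_infinitesimalMotions [Fintype V] (d : ℕ) (G : SimpleGraph V)
    (φ : V → EuclideanSpace ℝ (Fin d)) :
    rigidityRank d G φ + finrank ℝ (G.infinitesimalMotions φ) = d * Fintype.card V := by
  set S := (Submodule.span ℝ (rigidityRow d φ '' G.edgeSet)).map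
    (WithLp.linearEquiv 2 ℝ (V × Fin d → ℝ)).symm.toLinearMap
  have hS : (G.infinitesimalMotions φ).map (blockEquiv V d).toLinearMap = Sᗮ := by
    ext y
    obtain ⟨x, rfl⟩ := (blockEquiv V d).surjective y
    rw [Submodule.mem_map_equiv, LinearEquiv.symm_apply_apply,
      ← Submodule.span_singleton_le_iff_mem (blockEquiv V d x),
      ← Submodule.isOrtho_iff_le]
    simp only [S, Submodule.map_span, LinearEquiv.coe_coe, WithLp.coe_symm_linearEquiv]
    rw [Submodule.isOrtho_span]
    simp only [Set.mem_singleton_iff, forall_eq, Set.forall_mem_image, Sym2.forall,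
      SimpleGraph.mem_edgeSet, SimpleGraph.mem_infinitesimalMotions]
    exact forall₂_congr fun u v => forall_congr' fun huv => by
      rw [inner_blockEquiv_rigidityRow φ x huv.ne]
  rw [rigidityRank, ← LinearEquiv.finrank_map_eq (WithLp.linearEquiv 2 ℝ (V × Fin d → ℝ)).symm,
    ← (blockEquiv V d).finrank_map_eq, hS, Submodule.finrank_add_finrank_orthogonal,
    finrank_euclideanSpace, Fintype.card_prod, Fintype.card_fin, mul_comm]

end InfinitesimalMotions

theorem rigidityRank_le_general {V : Type*} [Fintype V] (d : ℕ) (G : SimpleGraph V)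
    (hn : d ≤ Fintype.card V) (φ : V → EuclideanSpace ℝ (Fin d)) :
    rigidityRank d G φ ≤ d * Fintype.card V - (d + 1).choose 2 := by
  have hmotions := G.choose_le_finrank_infinitesimalMotions φ (by rwa [finrank_euclideanSpace_fin])
  rw [finrank_euclideanSpace_fin] at hmotions
  have := rigidityRank_add_finrank_infinitesimalMotions d G φ
  omega

/-- For `d ≥ 1` and a finite simple graph `G` on `n ≥ d` vertices, every `d`-embedding
`φ` satisfies `rank Rig(G, φ) ≤ d * n - (d + 1).choose 2`. -/
theorem rigidityRank_le {V : Type*} [Fintype V] (d : ℕ) (hd : 1 ≤ d) (G : SimpleGraph V)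
    (hn : d ≤ Fintype.card V) (φ : V → EuclideanSpace ℝ (Fin d)) :
    rigidityRank d G φ ≤ d * Fintype.card V - (d + 1).choose 2 :=
  rigidityRank_le_general d G hn φ
end

section
/- (Gluing Lemma) Let d ≥ 1 and let G₁ and G₂ be finite simple graphs that are both generically d-rigid and such that the intersection G₁ ∩ G₂ (common vertices and common edges) has at least d vertices. Then the union G₁ ∪ G₂ is generically d-rigid. -/
/-!
Let `A` and `B` be the row spaces of the rigidity matrices of `G₁` and `G₂` (with vertex sets
`V₁` and `V₂`) at one configuration `φ`, inside `ℝ^(V × d)`. Every row is supported on the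
vertices of its graph and is orthogonal to the `(d + 1).choose 2` trivial motions (translations
and infinitesimal rotations). When the points of `S` span `ℝ^d`, the trivial motions stay
independent on `S`, so a space of such vectors supported on `S` has dimension at most
`d |S| - (d + 1).choose 2`. Applying this to `A ⊓ B` (supported on `V₁ ∩ V₂`) and to `A ⊔ B`, the
identity `dim (A ⊔ B) + dim (A ⊓ B) = dim A + dim B` shows that `G₁ ∪ G₂` has full rank at `φ` as
soon as `G₁` and `G₂` do.

Such a `φ` exists: linear independence of a family of polynomial vectors is the non-vanishing of
their Gram determinant, so full rank of `G₁`, full rank of `G₂`, and `d` points of `V₁ ∩ V₂`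
spanning `ℝ^d` each hold off the zero set of a nonzero polynomial, and a product of nonzero
polynomials does not vanish everywhere.
-/

open Module Submodule
open scoped Matrix

theorem finrank_add_card_le_ncard_of_dotProduct_eq_zero {ι κ : Type*} [Fintype ι] [Fintype κ]
    {T : Set ι} {X : Submodule ℝ (ι → ℝ)} (hXT : ∀ x ∈ X, ∀ i ∉ T, x i = 0)
    {F : κ → ι → ℝ} (hF : LinearIndependent ℝ fun k (i : T) => F k i)
    (hXF : ∀ x ∈ X, ∀ k, x ⬝ᵥ F k = 0) :
    finrank ℝ X + Fintype.card κ ≤ T.ncard := by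
  classical
  let R : (ι → ℝ) →ₗ[ℝ] (T → ℝ) := LinearMap.funLeft ℝ ℝ Subtype.val
  have hR : ∀ x ∈ X, ∀ y, R x ⬝ᵥ R y = x ⬝ᵥ y := by
    intro x hx y
    change ∑ i : T, x i * y i = ∑ i, x i * y i
    rw [← Fintype.sum_subtype_add_sum_subtype (· ∈ T),
      Fintype.sum_eq_zero (fun i : {i // i ∉ T} => x i * y i)
        fun i => by rw [hXT x hx i i.2, zero_mul], add_zero]
  let Φ : X × (κ → ℝ) →ₗ[ℝ] (T → ℝ) :=
    (R ∘ₗ X.subtype).coprod (Fintype.linearCombination ℝ fun k => R (F k))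
  -- injective because `x|_T` is orthogonal to every `F k|_T`
  have hΦ : Function.Injective Φ := by
    rw [← LinearMap.ker_eq_bot, LinearMap.ker_eq_bot']
    rintro ⟨⟨x, hx⟩, c⟩ h
    replace h : R x = -∑ k, c k • R (F k) := by
      simpa [Φ, Fintype.linearCombination_apply, add_eq_zero_iff_eq_neg] using h
    have hRx : R x = 0 := by
      rw [← dotProduct_self_eq_zero]
      nth_rewrite 2 [h]
      simp [dotProduct_sum, hR x hx, hXF x hx]
    obtain rfl : x = 0 := funext fun i => by
      by_cases hi : i ∈ T
      · exact congr_fun hRx ⟨i, hi⟩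
      · exact hXT x hx i hi
    have hsum : ∑ k, c k • R (F k) = 0 := by simpa [hRx, eq_comm] using h
    ext <;> simp [Fintype.linearIndependent_iff.1 hF c hsum]
  have := LinearMap.finrank_le_finrank_of_injective hΦ
  simpa [Set.ncard_eq_toFinset_card'] using this

theorem dotProduct_mulVec_self_eq_zero_of_transpose_eq_neg {n : Type*} [Fintype n]
    {B : Matrix n n ℝ} (hB : Bᵀ = -B) (x : n → ℝ) : x ⬝ᵥ B *ᵥ x = 0 := by
  have : x ⬝ᵥ B *ᵥ x = -(x ⬝ᵥ B *ᵥ x) := calc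
    _ = Bᵀ *ᵥ x ⬝ᵥ x := by rw [Matrix.dotProduct_mulVec, Matrix.mulVec_transpose]
    _ = _ := by rw [hB, Matrix.neg_mulVec, neg_dotProduct, dotProduct_comm]
  linarith

theorem eq_zero_of_add_mulVec_eq_zero {n : Type*} [Fintype n] [DecidableEq n] {a : n → ℝ}
    {B : Matrix n n ℝ} (hB : Bᵀ = -B) {s : Set (n → ℝ)} (hs : span ℝ s = ⊤)
    (h : ∀ x ∈ s, a + B *ᵥ x = 0) : a = 0 ∧ B = 0 := by
  have ha : a = 0 := by
    have : s ⊆ LinearMap.ker (dotProductBilin ℝ ℝ a) := fun x hx => by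
      simp [eq_neg_of_add_eq_zero_left (h x hx), dotProduct_comm _ x,
        dotProduct_mulVec_self_eq_zero_of_transpose_eq_neg hB]
    rw [← span_le, hs, top_le_iff] at this
    rw [← dotProduct_self_eq_zero]
    simpa using LinearMap.ext_iff.1 (LinearMap.ker_eq_top.1 this) a
  refine ⟨ha, ?_⟩
  have : s ⊆ LinearMap.ker (Matrix.toLin' B) := fun x hx => by
    simpa [ha] using h x hx
  rw [← span_le, hs, top_le_iff, LinearMap.ker_eq_top] at this
  exact Matrix.toLin'.map_eq_zero_iff.1 this

open MvPolynomial in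
theorem exists_ne_zero_finrank_span_le {σ ι E : Type*} [Fintype ι]
    (P : E → ι → MvPolynomial σ ℝ) (ψ₀ : σ → ℝ) :
    ∃ q : MvPolynomial σ ℝ, q ≠ 0 ∧ ∀ ψ, eval ψ q ≠ 0 →
      finrank ℝ (span ℝ (Set.range fun e i => eval ψ₀ (P e i))) ≤
        finrank ℝ (span ℝ (Set.range fun e i => eval ψ (P e i))) := by
  classical
  obtain ⟨κ, a, -, hspan, hli⟩ := exists_linearIndependent' ℝ fun e i => eval ψ₀ (P e i)
  have := hli.finite
  have := Fintype.ofFinite κ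
  -- the Gram determinant of a maximal subfamily independent at `ψ₀`
  let q : MvPolynomial σ ℝ := (Matrix.of fun k l => ∑ i, P (a k) i * P (a l) i).det
  have hq (ψ : σ → ℝ) :
      eval ψ q ≠ 0 ↔ LinearIndependent ℝ fun k i => eval ψ (P (a k) i) := by
    rw [← LinearMap.linearIndependent_iff (WithLp.linearEquiv 2 ℝ (ι → ℝ)).symm.toLinearMap
      (LinearEquiv.ker _), ← Matrix.det_gram_ne_zero_iff_linearIndependent, RingHom.map_det]
    congr! 2
    ext k l
    simp [Matrix.gram, PiLp.inner_apply, mul_comm]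
  refine ⟨q, fun h => (hq ψ₀).2 hli (by simp [h]), fun ψ hψ => ?_⟩
  rw [← hspan, finrank_span_eq_card hli, ← finrank_span_eq_card ((hq ψ).1 hψ)]
  exact finrank_mono (span_mono (Set.range_comp_subset_range a fun e i => eval ψ (P e i)))

section Rigidity

variable {V : Type*} {d : ℕ}

open scoped Classical in
theorem rigidityRow_mk (φ : V → EuclideanSpace ℝ (Fin d)) (u v : V) (p : V × Fin d) :
    rigidityRow d φ s(u, v) p =
      if p.1 = u then φ u p.2 - φ v p.2 else if p.1 = v then φ v p.2 - φ u p.2 else 0 := by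
  simp [rigidityRow]

theorem rigidityRow_self (φ : V → EuclideanSpace ℝ (Fin d)) (u : V) :
    rigidityRow d φ s(u, u) = 0 := by
  funext p
  simp [rigidityRow_mk]

/-- For skew-symmetric `B`, the infinitesimal rigid motion with translation `a` and rotation `B`. -/
def trivialMotion (φ : V → EuclideanSpace ℝ (Fin d)) (a : Fin d → ℝ)
    (B : Matrix (Fin d) (Fin d) ℝ) : V × Fin d → ℝ :=
  fun p => a p.2 + (B *ᵥ (φ p.1).ofLp) p.2

theorem rigidityRow_dotProduct_trivialMotion [Fintype V] (φ : V → EuclideanSpace ℝ (Fin d))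
    (a : Fin d → ℝ) {B : Matrix (Fin d) (Fin d) ℝ} (hB : Bᵀ = -B) (e : Sym2 V) :
    rigidityRow d φ e ⬝ᵥ trivialMotion φ a B = 0 := by
  induction e using Sym2.ind with | _ u v => ?_
  by_cases huv : u = v
  · simp [huv, rigidityRow_self]
  have hskew := dotProduct_mulVec_self_eq_zero_of_transpose_eq_neg hB ((φ u).ofLp - (φ v).ofLp)
  rw [dotProduct, Fintype.sum_prod_type, Fintype.sum_eq_add u v huv fun w hw => by
    simp [rigidityRow_mk, hw.1, hw.2]]
  simp only [rigidityRow_mk, trivialMotion, ↓reduceIte, Ne.symm huv]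
  rw [← hskew, dotProduct, Matrix.mulVec_sub, ← Finset.sum_add_distrib]
  exact Finset.sum_congr rfl fun c _ => by simp only [Pi.sub_apply]; ring

theorem card_motionIndex (d : ℕ) :
    Fintype.card (Fin d ⊕ {q : Fin d × Fin d // q.1 < q.2}) = (d + 1).choose 2 := by
  rw [Fintype.card_sum, Fintype.card_fin, Fintype.card_subtype, Fintype.card_product_filter_lt,
    Fintype.card_fin, Nat.choose_succ_succ', Nat.choose_one_right]

def motionBasis (φ : V → EuclideanSpace ℝ (Fin d)) :
    Fin d ⊕ {q : Fin d × Fin d // q.1 < q.2} → V × Fin d → ℝ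
  | .inl c => trivialMotion φ (Pi.single c 1) 0
  | .inr q => trivialMotion φ 0 (Matrix.single q.1.1 q.1.2 1 - Matrix.single q.1.2 q.1.1 1)

theorem sum_smul_motionBasis (φ : V → EuclideanSpace ℝ (Fin d))
    (g : Fin d ⊕ {q : Fin d × Fin d // q.1 < q.2} → ℝ) :
    ∑ i, g i • motionBasis φ i = trivialMotion φ (fun c => g (.inl c))
      (∑ q, g (.inr q) • (Matrix.single q.1.1 q.1.2 1 - Matrix.single q.1.2 q.1.1 1)) := by
  funext p
  simp [Fintype.sum_sum_type, motionBasis, trivialMotion, Matrix.sum_mulVec, Matrix.smul_mulVec,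
    Pi.single_apply]

theorem linearIndependent_motionBasis_restrict (φ : V → EuclideanSpace ℝ (Fin d)) {S : Set V}
    (hS : span ℝ ((fun v => (φ v).ofLp) '' S) = ⊤) :
    LinearIndependent ℝ fun i (p : (Prod.fst ⁻¹' S : Set (V × Fin d))) => motionBasis φ i p := by
  rw [Fintype.linearIndependent_iff]
  intro g hg
  set B := ∑ q, g (.inr q) • (Matrix.single q.1.1 q.1.2 (1 : ℝ) - Matrix.single q.1.2 q.1.1 1)
  have hB : Bᵀ = -B := by
    simp [B, Matrix.transpose_sum, Matrix.transpose_single, ← Finset.sum_neg_distrib, ← smul_neg]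
  have hmotion : ∀ x ∈ (fun v => (φ v).ofLp) '' S, (fun c => g (.inl c)) + B *ᵥ x = 0 := by
    rintro _ ⟨v, hv, rfl⟩
    funext c
    have h₁ := congr_fun hg ⟨(v, c), hv⟩
    have h₂ := congr_fun (sum_smul_motionBasis φ g) (v, c)
    simp only [Finset.sum_apply, Pi.smul_apply] at h₁ h₂
    rw [h₁] at h₂
    exact h₂.symm
  obtain ⟨ha, hB0⟩ := eq_zero_of_add_mulVec_eq_zero hB hS hmotion
  rintro (c | ⟨⟨i, j⟩, hij⟩)
  · exact congr_fun ha c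
  · have hBij : B i j = g (.inr ⟨(i, j), hij⟩) := by
      simp only [B, Matrix.sum_apply, Matrix.smul_apply, Matrix.sub_apply, Matrix.single_apply]
      rw [Finset.sum_eq_single ⟨(i, j), hij⟩]
      · simp [hij.ne]
      · rintro ⟨⟨i', j'⟩, hij'⟩ - hne
        have h₁ : ¬(i' = i ∧ j' = j) := by rintro ⟨rfl, rfl⟩; exact hne rfl
        have h₂ : ¬(j' = i ∧ i' = j) := by rintro ⟨rfl, rfl⟩; exact lt_asymm hij hij'
        simp [h₁, h₂]
      · simp
    simpa [hB0] using hBij.symm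

section Loads

variable [Fintype V]

/-- Loads on the vertices of `S` with zero total force and torque, i.e. orthogonal to every
trivial motion. -/
def equilibriumLoads (φ : V → EuclideanSpace ℝ (Fin d)) (S : Set V) :
    Submodule ℝ (V × Fin d → ℝ) where
  carrier := {x | (∀ p : V × Fin d, p.1 ∉ S → x p = 0) ∧ ∀ i, x ⬝ᵥ motionBasis φ i = 0}
  add_mem' hx hy := ⟨fun p hp => by simp [hx.1 p hp, hy.1 p hp],
    fun i => by simp [add_dotProduct, hx.2 i, hy.2 i]⟩
  zero_mem' := ⟨fun _ _ => rfl, fun _ => zero_dotProduct _⟩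
  smul_mem' c x hx := ⟨fun p hp => by simp [hx.1 p hp], fun i => by simp [hx.2 i]⟩

theorem equilibriumLoads_mono (φ : V → EuclideanSpace ℝ (Fin d)) {S T : Set V} (h : S ⊆ T) :
    equilibriumLoads φ S ≤ equilibriumLoads φ T :=
  fun _ hx => ⟨fun p hp => hx.1 p fun hS => hp (h hS), hx.2⟩

theorem equilibriumLoads_inf (φ : V → EuclideanSpace ℝ (Fin d)) (S T : Set V) :
    equilibriumLoads φ S ⊓ equilibriumLoads φ T = equilibriumLoads φ (S ∩ T) := by
  refine le_antisymm (fun x ⟨hS, hT⟩ => ⟨fun p hp => ?_, hS.2⟩)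
    (le_inf (equilibriumLoads_mono φ Set.inter_subset_left)
      (equilibriumLoads_mono φ Set.inter_subset_right))
  by_cases h : p.1 ∈ S
  · exact hT.1 p fun hT => hp ⟨h, hT⟩
  · exact hS.1 p h

theorem finrank_equilibriumLoads_add_le (φ : V → EuclideanSpace ℝ (Fin d)) {S : Set V}
    (hS : span ℝ ((fun v => (φ v).ofLp) '' S) = ⊤) :
    finrank ℝ (equilibriumLoads φ S) + (d + 1).choose 2 ≤ d * S.ncard := by
  have := finrank_add_card_le_ncard_of_dotProduct_eq_zero (T := Prod.fst ⁻¹' S)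
    (X := equilibriumLoads φ S)
    (fun x hx p hp => hx.1 p hp) (linearIndependent_motionBasis_restrict φ hS) fun x hx => hx.2
  rwa [card_motionIndex, ← Set.prod_univ, Set.ncard_prod, Set.ncard_univ, Nat.card_fin,
    mul_comm] at this

end Loads

def rigidityRowSpace (d : ℕ) (φ : V → EuclideanSpace ℝ (Fin d)) (E : Set (Sym2 V)) :
    Submodule ℝ (V × Fin d → ℝ) :=
  span ℝ (rigidityRow d φ '' E)

theorem rigidityRowSpace_union (φ : V → EuclideanSpace ℝ (Fin d)) (E F : Set (Sym2 V)) :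
    rigidityRowSpace d φ (E ∪ F) = rigidityRowSpace d φ E ⊔ rigidityRowSpace d φ F := by
  rw [rigidityRowSpace, Set.image_union, span_union]; rfl

theorem rigidityRowSpace_le_equilibriumLoads [Fintype V] (φ : V → EuclideanSpace ℝ (Fin d))
    (H : SimpleGraph.Subgraph (⊤ : SimpleGraph V)) :
    rigidityRowSpace d φ H.edgeSet ≤ equilibriumLoads φ H.verts := by
  rw [rigidityRowSpace, span_le]
  rintro _ ⟨e, he, rfl⟩
  refine ⟨fun p hp => ?_, fun i => ?_⟩
  · induction e using Sym2.ind with | _ u v => ?_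
    have hu := H.mem_verts_of_mem_edge he (Sym2.mem_mk_left u v)
    have hv := H.mem_verts_of_mem_edge he (Sym2.mem_mk_right u v)
    rw [rigidityRow_mk, if_neg (ne_of_mem_of_not_mem hu hp).symm,
      if_neg (ne_of_mem_of_not_mem hv hp).symm]
  · rcases i with c | q
    · exact rigidityRow_dotProduct_trivialMotion φ _ (by simp) e
    · exact rigidityRow_dotProduct_trivialMotion φ _ (by simp [Matrix.transpose_single]) e

theorem finrank_rigidityRowSpace_sup [Fintype V] {φ : V → EuclideanSpace ℝ (Fin d)}
    {H₁ H₂ : SimpleGraph.Subgraph (⊤ : SimpleGraph V)}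
    (hspan : span ℝ ((fun v => (φ v).ofLp) '' (H₁.verts ∩ H₂.verts)) = ⊤)
    (h₁ : d * H₁.verts.ncard - (d + 1).choose 2 ≤ finrank ℝ (rigidityRowSpace d φ H₁.edgeSet))
    (h₂ : d * H₂.verts.ncard - (d + 1).choose 2 ≤ finrank ℝ (rigidityRowSpace d φ H₂.edgeSet)) :
    finrank ℝ (rigidityRowSpace d φ (H₁ ⊔ H₂).edgeSet) =
      d * (H₁ ⊔ H₂).verts.ncard - (d + 1).choose 2 := by
  rw [SimpleGraph.Subgraph.edgeSet_sup, SimpleGraph.Subgraph.verts_sup, rigidityRowSpace_union]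
  set A := rigidityRowSpace d φ H₁.edgeSet
  set B := rigidityRowSpace d φ H₂.edgeSet
  have hA := rigidityRowSpace_le_equilibriumLoads φ H₁
  have hB := rigidityRowSpace_le_equilibriumLoads φ H₂
  have hinf : finrank ℝ ↥(A ⊓ B) + (d + 1).choose 2 ≤ d * (H₁.verts ∩ H₂.verts).ncard := by
    refine le_trans ?_ (finrank_equilibriumLoads_add_le φ hspan)
    rw [← equilibriumLoads_inf]
    gcongr
    exact finrank_mono (inf_le_inf hA hB)
  have hsup : finrank ℝ ↥(A ⊔ B) + (d + 1).choose 2 ≤ d * (H₁.verts ∪ H₂.verts).ncard := by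
    refine le_trans ?_ (finrank_equilibriumLoads_add_le φ (eq_top_mono
      (span_mono (Set.image_mono (Set.inter_subset_left.trans Set.subset_union_left))) hspan))
    gcongr
    exact finrank_mono (sup_le (hA.trans (equilibriumLoads_mono φ Set.subset_union_left))
      (hB.trans (equilibriumLoads_mono φ Set.subset_union_right)))
  have hcount : d * (H₁.verts ∪ H₂.verts).ncard + d * (H₁.verts ∩ H₂.verts).ncard =
      d * H₁.verts.ncard + d * H₂.verts.ncard := by
    rw [← mul_add, Set.ncard_union_add_ncard_inter, mul_add]
  have hle₁ : d * (H₁.verts ∩ H₂.verts).ncard ≤ d * H₁.verts.ncard :=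
    Nat.mul_le_mul_left d (Set.ncard_le_ncard Set.inter_subset_left)
  have hle₂ : d * (H₁.verts ∩ H₂.verts).ncard ≤ d * H₂.verts.ncard :=
    Nat.mul_le_mul_left d (Set.ncard_le_ncard Set.inter_subset_right)
  have := finrank_sup_add_finrank_inf_eq A B
  omega

theorem extend_rigidityRow (S : Set V) (φ : V → EuclideanSpace ℝ (Fin d)) (e : Sym2 S) :
    Function.extend (Prod.map Subtype.val id) (rigidityRow d (φ ∘ (↑)) e) 0 =
      rigidityRow d φ (e.map (↑)) := by
  induction e using Sym2.ind with | _ u v => ?_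
  obtain ⟨u, hu⟩ := u
  obtain ⟨v, hv⟩ := v
  funext ⟨w, c⟩
  by_cases hw : w ∈ S
  · refine ((Subtype.val_injective.prodMap Function.injective_id).extend_apply _ _
      ((⟨w, hw⟩ : S), c)).trans ?_
    simp only [Function.comp_apply, Sym2.map_mk, rigidityRow_mk]
    split_ifs <;> simp_all
  · rw [Function.extend_apply' _ _ _ (by
      rintro ⟨⟨x, _⟩, hx⟩; cases hx; exact hw x.2)]
    simp [rigidityRow_mk, ne_of_mem_of_not_mem hu hw |>.symm, ne_of_mem_of_not_mem hv hw |>.symm]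

theorem rigidityRank_coe (H : SimpleGraph.Subgraph (⊤ : SimpleGraph V))
    (φ : V → EuclideanSpace ℝ (Fin d)) :
    rigidityRank d H.coe (φ ∘ (↑)) = finrank ℝ (rigidityRowSpace d φ H.edgeSet) := by
  let L := Function.ExtendByZero.linearMap ℝ
    (Prod.map Subtype.val id : H.verts × Fin d → V × Fin d)
  have hL : Function.Injective L := Function.extend_injective
    (Subtype.val_injective.prodMap Function.injective_id) (0 : V × Fin d → ℝ)
  rw [rigidityRank, (equivMapOfInjective L hL _).finrank_eq, map_span, ← Set.image_comp,
    rigidityRowSpace, ← H.image_coe_edgeSet_coe, ← Set.image_comp]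
  have hrows : L ∘ rigidityRow d (φ ∘ (↑)) = rigidityRow d φ ∘ Sym2.map (↑) :=
    funext (extend_rigidityRow H.verts φ)
  rw [hrows]

theorem rigidityRank_eq_finrank_extend (H : SimpleGraph.Subgraph (⊤ : SimpleGraph V))
    (φ : H.verts → EuclideanSpace ℝ (Fin d)) :
    rigidityRank d H.coe φ =
      finrank ℝ (rigidityRowSpace d (Function.extend Subtype.val φ 0) H.edgeSet) := by
  rw [← rigidityRank_coe, Function.extend_comp Subtype.val_injective]

section Generic

open MvPolynomial

def configuration (ψ : V × Fin d → ℝ) : V → EuclideanSpace ℝ (Fin d) :=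
  fun v => WithLp.toLp 2 fun c => ψ (v, c)

open scoped Classical in
noncomputable def genericRigidityRow (d : ℕ) : Sym2 V → V × Fin d → MvPolynomial (V × Fin d) ℝ :=
  Sym2.lift ⟨fun u v p => if p.1 = u then X (u, p.2) - X (v, p.2)
      else if p.1 = v then X (v, p.2) - X (u, p.2) else 0, by
    intro u v
    funext p
    by_cases h₁ : p.1 = u <;> by_cases h₂ : p.1 = v <;> simp_all⟩

theorem eval_genericRigidityRow (ψ : V × Fin d → ℝ) (e : Sym2 V) (p : V × Fin d) :
    eval ψ (genericRigidityRow d e p) = rigidityRow d (configuration ψ) e p := by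
  induction e using Sym2.ind with | _ u v => ?_
  simp only [genericRigidityRow, Sym2.lift_mk, rigidityRow_mk]
  split_ifs <;> simp [configuration]

theorem exists_ne_zero_finrank_rigidityRowSpace_le [Fintype V] (E : Set (Sym2 V))
    (φ₀ : V → EuclideanSpace ℝ (Fin d)) :
    ∃ q : MvPolynomial (V × Fin d) ℝ, q ≠ 0 ∧ ∀ ψ, eval ψ q ≠ 0 →
      finrank ℝ (rigidityRowSpace d φ₀ E) ≤ finrank ℝ (rigidityRowSpace d (configuration ψ) E) := by
  obtain ⟨q, hq, h⟩ :=
    exists_ne_zero_finrank_span_le (fun e : E => genericRigidityRow d e) fun p => φ₀ p.1 p.2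
  have hrows (ψ : V × Fin d → ℝ) : (Set.range fun (e : E) p => eval ψ (genericRigidityRow d e p)) =
      rigidityRow d (configuration ψ) '' E := by
    simp only [Set.image_eq_range, eval_genericRigidityRow]
  refine ⟨q, hq, fun ψ hψ => ?_⟩
  have := h ψ hψ
  rwa [hrows, hrows] at this

theorem exists_ne_zero_span_eq_top [Fintype V] {S : Set V} (hS : d ≤ S.ncard) :
    ∃ q : MvPolynomial (V × Fin d) ℝ, q ≠ 0 ∧ ∀ ψ, eval ψ q ≠ 0 →
      span ℝ ((fun v => (configuration ψ v).ofLp) '' S) = ⊤ := by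
  classical
  obtain ⟨p⟩ : Nonempty (Fin d ↪ S) := Function.Embedding.nonempty_of_card_le <| by
    simpa [Set.ncard_eq_toFinset_card'] using hS
  -- the point `p k` sits at the `k`-th standard basis vector
  let ψ₀ : V × Fin d → ℝ := fun x => if x.1 = p x.2 then 1 else 0
  obtain ⟨q, hq, h⟩ := exists_ne_zero_finrank_span_le (fun (v : S) (c : Fin d) => X ((v : V), c)) ψ₀
  have h₀ : span ℝ (Set.range fun (v : S) c => eval ψ₀ (X ((v : V), c))) = ⊤ := by
    refine eq_top_mono (span_mono ?_) (Pi.basisFun ℝ (Fin d)).span_eq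
    rintro _ ⟨k, rfl⟩
    refine ⟨p k, funext fun c => ?_⟩
    simp only [ψ₀, eval_X, Pi.basisFun_apply, Pi.single_apply]
    by_cases hck : c = k
    · simp [hck]
    · rw [if_neg hck, if_neg fun h => hck (p.injective (Subtype.val_injective h)).symm]
  refine ⟨q, hq, fun ψ hψ => ?_⟩
  have := h ψ hψ
  have hpos : (fun (v : S) c => eval ψ (X ((v : V), c))) =
      fun v : S => (configuration ψ v).ofLp := by
    funext v c
    simp [configuration]
  rw [h₀, finrank_top, finrank_fin_fun, hpos] at this
  rw [Set.image_eq_range]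
  exact eq_top_of_finrank_eq (le_antisymm (finrank_le _) (by simpa using this))

end Generic

end Rigidity

theorem gluing_lemma_general {V : Type*} [Finite V] (d : ℕ)
    (G₁ G₂ : SimpleGraph.Subgraph (⊤ : SimpleGraph V))
    (h₁ : GenericallyRigid d G₁.coe) (h₂ : GenericallyRigid d G₂.coe)
    (hcap : d ≤ (G₁ ⊓ G₂).verts.ncard) :
    GenericallyRigid d (G₁ ⊔ G₂).coe := by
  cases nonempty_fintype V
  obtain ⟨φ₁, hφ₁⟩ := h₁
  obtain ⟨φ₂, hφ₂⟩ := h₂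
  obtain ⟨q₁, hq₁, hgen₁⟩ :=
    exists_ne_zero_finrank_rigidityRowSpace_le G₁.edgeSet (Function.extend Subtype.val φ₁ 0)
  obtain ⟨q₂, hq₂, hgen₂⟩ :=
    exists_ne_zero_finrank_rigidityRowSpace_le G₂.edgeSet (Function.extend Subtype.val φ₂ 0)
  obtain ⟨q₃, hq₃, hgen₃⟩ := exists_ne_zero_span_eq_top hcap
  obtain ⟨ψ, hψ⟩ : ∃ ψ, MvPolynomial.eval ψ (q₁ * q₂ * q₃) ≠ 0 := by
    by_contra! h
    exact mul_ne_zero (mul_ne_zero hq₁ hq₂) hq₃ (MvPolynomial.funext fun ψ => by simp [h ψ])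
  simp only [map_mul, mul_ne_zero_iff] at hψ
  rw [rigidityRank_eq_finrank_extend, Nat.card_coe_set_eq] at hφ₁ hφ₂
  refine ⟨configuration ψ ∘ (↑), ?_⟩
  rw [rigidityRank_coe, Nat.card_coe_set_eq]
  exact finrank_rigidityRowSpace_sup (by simpa using hgen₃ ψ hψ.2)
    (hφ₁ ▸ hgen₁ ψ hψ.1.1) (hφ₂ ▸ hgen₂ ψ hψ.1.2)

/-- Gluing Lemma: if `G₁` and `G₂` (graphs with possibly different vertex sets, modelled
as subgraphs of a complete ambient graph) are both generically `d`-rigid and their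
intersection has at least `d` vertices, then `G₁ ∪ G₂` is generically `d`-rigid. -/
theorem gluing_lemma {V : Type*} [Finite V] (d : ℕ) (hd : 1 ≤ d)
    (G₁ G₂ : SimpleGraph.Subgraph (⊤ : SimpleGraph V))
    (h₁ : GenericallyRigid d G₁.coe) (h₂ : GenericallyRigid d G₂.coe)
    (hcap : d ≤ (G₁ ⊓ G₂).verts.ncard) :
    GenericallyRigid d (G₁ ⊔ G₂).coe :=
  gluing_lemma_general d G₁ G₂ h₁ h₂ hcap
end
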